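/- For m ≥ 5, the 3-percolation number of the grid P₅ □ Pₘ is at least 2m + 2. -/

import Mathlib

open SimpleGraph

/-- The set of vertices eventually infected in `r`-neighbor bootstrap percolation
on the graph `G`, starting from the initially infected set `A`. -/
inductive Infected {V : Type*} (G : SimpleGraph V) (r : ℕ) (A : Set V) : V → Prop
  | init {v : V} : v ∈ A → Infected G r A v
  | step {v : V} (T : Finset V) : r ≤ T.card → (∀ u ∈ T, G.Adj u v) →
      (∀ u ∈ T, Infected G r A u) → Infected G r A v

/-- `A` is an `r`-percolating set of `G`. -/
def Percolates {V : Type*} (G : SimpleGraph V) (r : ℕ) (A : Set V) : Prop :=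
  ∀ v, Infected G r A v

/-- The `r`-percolation number of `G`: minimum size of an `r`-percolating set. -/
noncomputable def percNum (V : Type*) [Fintype V] (G : SimpleGraph V) (r : ℕ) : ℕ :=
  sInf {k | ∃ A : Finset V, A.card = k ∧ Percolates G r (↑A)}

/-- The `n × m` grid graph `Pₙ □ Pₘ`. -/
def gridGraph (n m : ℕ) : SimpleGraph (Fin n × Fin m) :=
  (pathGraph n) □ (pathGraph m)

/-- A boundary vertex of a grid: degree at most 3. -/
def IsBoundary {V : Type*} (G : SimpleGraph V) (v : V) : Prop :=
  (G.neighborSet v).ncard ≤ 3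


/-!
Every vertex that becomes infected has at least three already infected neighbours, so it adds at
least three edges to the subgraph induced by the infected set. Hence a 3-percolating set `A` of a
finite graph satisfies `3 (|V| - |A|) ≤ |E|`. The grid `P₅ □ Pₘ` has `5m` vertices and `9m - 5`
edges, which gives `3 |A| ≥ 6m + 5`, i.e. `|A| ≥ 2m + 2`.
-/

open Finset

namespace SimpleGraph

instance (n : ℕ) : DecidableRel (pathGraph n).Adj := fun _ _ =>
  decidable_of_iff' _ pathGraph_adj

instance {α β : Type*} (G : SimpleGraph α) (H : SimpleGraph β) [DecidableEq α] [DecidableEq β]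
    [DecidableRel G.Adj] [DecidableRel H.Adj] : DecidableRel (G □ H).Adj := fun _ _ =>
  decidable_of_iff' _ boxProd_adj

theorem card_edgeFinset_boxProd {α β : Type*} [Fintype α] [Fintype β] [DecidableEq α]
    [DecidableEq β] (G : SimpleGraph α) (H : SimpleGraph β) [DecidableRel G.Adj]
    [DecidableRel H.Adj] :
    #(G □ H).edgeFinset = Fintype.card β * #G.edgeFinset + Fintype.card α * #H.edgeFinset := by
  apply Nat.eq_of_mul_eq_mul_left two_pos
  rw [← sum_degrees_eq_twice_card_edges, Fintype.sum_prod_type]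
  trans ∑ a, ∑ b, (G.degree a + H.degree b)
  · exact sum_congr rfl fun a _ => sum_congr rfl fun b _ => by convert degree_boxProd (a, b)
  · simp only [sum_add_distrib, sum_const, card_univ, smul_eq_mul, ← mul_sum,
      sum_degrees_eq_twice_card_edges]
    ring

theorem card_edgeFinset_pathGraph (n : ℕ) : #(pathGraph n).edgeFinset = n - 1 := by
  cases n with
  | zero => exact card_eq_zero.2 (eq_empty_of_isEmpty _)
  | succ k =>
    have hinj : Function.Injective fun i : Fin k => s(i.castSucc, i.succ) := by
      intro i j hij
      simp only [Sym2.eq_iff, Fin.ext_iff, Fin.val_castSucc, Fin.val_succ] at hij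
      ext; omega
    have himage :
        (pathGraph (k + 1)).edgeFinset = univ.image fun i : Fin k => s(i.castSucc, i.succ) := by
      ext e
      induction e using Sym2.ind with
      | _ a b =>
        simp only [mem_edgeFinset, mem_edgeSet, pathGraph_adj, mem_image, mem_univ, true_and,
          Sym2.eq_iff, Fin.ext_iff, Fin.val_castSucc, Fin.val_succ]
        constructor
        · rintro (h | h)
          · exact ⟨⟨a, by omega⟩, Or.inl ⟨rfl, h⟩⟩
          · exact ⟨⟨b, by omega⟩, Or.inr ⟨rfl, h⟩⟩
        · rintro ⟨i, h | h⟩ <;> omega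
    rw [himage, card_image_of_injective _ hinj, card_univ, Fintype.card_fin, Nat.add_sub_cancel]

variable {V : Type*} (G : SimpleGraph V) [DecidableRel G.Adj]

/-- Twice the number of edges of `G` with both ends in `S`. -/
def degreeSumWithin (S : Finset V) : ℕ :=
  ∑ v ∈ S, #{u ∈ S | G.Adj v u}

theorem degreeSumWithin_insert [DecidableEq V] {S : Finset V} {v : V} (hv : v ∉ S) :
    G.degreeSumWithin (insert v S) = G.degreeSumWithin S + 2 * #{u ∈ S | G.Adj v u} := by
  have hrow : ∀ w ∈ S,
      #{u ∈ insert v S | G.Adj w u} = #{u ∈ S | G.Adj w u} + if G.Adj w v then 1 else 0 := by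
    intro w _
    rw [filter_insert]
    split_ifs with h
    · exact card_insert_of_notMem fun hmem => hv (mem_filter.1 hmem).1
    · rfl
  have hcol : #{w ∈ S | G.Adj w v} = #{u ∈ S | G.Adj v u} := by
    simp_rw [G.adj_comm _ v]
  unfold degreeSumWithin
  rw [sum_insert hv, filter_insert, if_neg (G.irrefl), sum_congr rfl hrow, sum_add_distrib,
    ← card_filter, hcol]
  ring

theorem degreeSumWithin_univ [Fintype V] : G.degreeSumWithin univ = 2 * #G.edgeFinset := by
  rw [← sum_degrees_eq_twice_card_edges]
  refine sum_congr rfl fun v _ => ?_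
  rw [← card_neighborFinset_eq_degree, neighborFinset_eq_filter]

end SimpleGraph

instance (n m : ℕ) : DecidableRel (gridGraph n m).Adj :=
  inferInstanceAs (DecidableRel (pathGraph n □ pathGraph m).Adj)

theorem card_edgeFinset_gridGraph (n m : ℕ) :
    #(gridGraph n m).edgeFinset = m * (n - 1) + n * (m - 1) := by
  show #(pathGraph n □ pathGraph m).edgeFinset = _
  simp [SimpleGraph.card_edgeFinset_boxProd, SimpleGraph.card_edgeFinset_pathGraph]

section Percolation

variable {V : Type*} {G : SimpleGraph V} {r : ℕ}

theorem Infected.mem_of_closed {A S : Set V} (hAS : A ⊆ S)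
    (hS : ∀ v (T : Finset V), r ≤ #T → (∀ u ∈ T, G.Adj u v) → (∀ u ∈ T, u ∈ S) → v ∈ S)
    {v : V} (h : Infected G r A v) : v ∈ S := by
  induction h with
  | init hv => exact hAS hv
  | step T hT hadj _ ih => exact hS _ T hT hadj ih

/-- A largest superset `S` of `A` obeying the edge count `r (|S| - |A|) ≤ e(S)` is closed under
the infection rule, since adding an infectable vertex preserves the count; so `S` contains every
infected vertex. -/
theorem Percolates.mul_card_le_mul_card_add_card_edgeFinset [Fintype V] [DecidableRel G.Adj]
    {A : Finset V} (h : Percolates G r ↑A) : r * Fintype.card V ≤ r * #A + #G.edgeFinset := by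
  classical
  obtain ⟨S, hS, hmax⟩ := exists_max_image
    {S : Finset V | A ⊆ S ∧ 2 * r * #S ≤ 2 * r * #A + G.degreeSumWithin S} card ⟨A, by simp⟩
  obtain ⟨-, hAS, hbound⟩ := mem_filter.1 hS
  have hSuniv : S = univ := by
    refine eq_univ_of_forall fun v => (h v).mem_of_closed (S := ↑S) (coe_subset.2 hAS) ?_
    intro v T hT hadj hTS
    by_contra hv
    have hTle : #T ≤ #{u ∈ S | G.Adj v u} :=
      card_le_card fun u hu => mem_filter.2 ⟨hTS u hu, (hadj u hu).symm⟩
    have hgrow := hmax (insert v S) <| mem_filter.2 ⟨mem_univ _, hAS.trans (subset_insert _ _),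
      by rw [G.degreeSumWithin_insert hv, card_insert_of_notMem hv]; nlinarith⟩
    rw [card_insert_of_notMem hv] at hgrow
    omega
  rw [hSuniv, G.degreeSumWithin_univ, card_univ] at hbound
  linarith

theorem exists_percolates_card_eq_percNum (V : Type*) [Fintype V] (G : SimpleGraph V) (r : ℕ) :
    ∃ A : Finset V, #A = percNum V G r ∧ Percolates G r ↑A :=
  Nat.sInf_mem (s := {k | ∃ A : Finset V, #A = k ∧ Percolates G r ↑A})
    ⟨_, univ, rfl, fun _ => .init (by simp)⟩

theorem mul_card_le_mul_percNum_add_card_edgeFinset [Fintype V] (G : SimpleGraph V)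
    [DecidableRel G.Adj] (r : ℕ) : r * Fintype.card V ≤ r * percNum V G r + #G.edgeFinset := by
  obtain ⟨A, hA, hperc⟩ := exists_percolates_card_eq_percNum V G r
  exact hA ▸ hperc.mul_card_le_mul_card_add_card_edgeFinset

end Percolation

theorem stmt_13 (m : ℕ) (hm : 5 ≤ m) :
    2 * m + 2 ≤ percNum (Fin 5 × Fin m) (gridGraph 5 m) 3 := by
  have h := mul_card_le_mul_percNum_add_card_edgeFinset (gridGraph 5 m) 3
  rw [card_edgeFinset_gridGraph, Fintype.card_prod, Fintype.card_fin, Fintype.card_fin] at h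
  omega
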